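/- Let α be a cascading n-sequence with lower-subinterval decomposition I_1, ..., I_P, and let I_k = (a, a+1, ..., m). For each b in {a, ..., m}, let h_b denote the height of the box added to the b-th partition when f_{I_k} is applied to R_{k-1} (i.e., if the operator f_b occurring in I_k replaces a string of length c-1 by one of length c in the b-th rigged partition, then h_b is the number of strings of length at least c in the resulting b-th partition). Then h_{b+1} <= h_b + 1 for every b with a <= b < m. -/

import Mathlib

namespace CascRC

abbrev RP := Multiset (ℕ × ℤ)
abbrev RC := ℕ → RP

/-- The Cartan matrix of type `A`. -/
def cartanA (a b : ℕ) : ℤ :=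
  if a = b then 2 else if b = a + 1 ∨ a = b + 1 then -1 else 0

/-- The smallest rigging of a rigged partition (0 if empty). -/
noncomputable def minRig (ν : RP) : ℤ :=
  if h : ν = 0 then 0
  else (ν.map Prod.snd).toFinset.min'
    (Multiset.toFinset_nonempty.mpr (by simpa [Multiset.map_eq_zero] using h))

/-- The greatest length of a string whose rigging is the smallest rigging. -/
noncomputable def selLen (ν : RP) : ℕ :=
  ((ν.filter (fun s => s.2 = minRig ν)).map Prod.fst).sup

/-- The Kashiwara operator `f_a` on rigged configurations. -/
noncomputable def fOp (a : ℕ) (R : RC) : RC :=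
  if R a = 0 ∨ 0 < minRig (R a) then
    fun b => (if b = a then ({(1, -1)} : RP) else 0)
      + (R b).map (fun s => if 0 < s.1 then (s.1, s.2 - cartanA a b) else s)
  else
    fun b =>
      (if b = a then ({(selLen (R a) + 1, minRig (R a) - 1)} : RP) else 0)
      + ((if b = a then (R a).erase (selLen (R a), minRig (R a)) else R b).map
          (fun s => if selLen (R a) < s.1 then (s.1, s.2 - cartanA a b) else s))

/-- A list `γ` acts by `f_γ = f_{γ_p} ∘ ⋯ ∘ f_{γ₁}`. -/
noncomputable def fList (γ : List ℕ) (R : RC) : RC :=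
  γ.foldl (fun S a => fOp a S) R

def emptyRC : RC := fun _ => 0

/-- `RC(α)`: the result of the list `α` acting on the empty rigged configuration. -/
noncomputable def RCseq (α : List ℕ) : RC := fList α emptyRC

/-- The `m`-lower subinterval `(a, a+1, …, m)`. -/
def lowerInt (a m : ℕ) : List ℕ := List.range' a (m + 1 - a)

def IsLowerIv (n : ℕ) (p : ℕ × ℕ) : Prop := 1 ≤ p.1 ∧ p.1 ≤ p.2 ∧ p.2 ≤ n

/-- Ordering between consecutive lower subintervals in a cascading sequence. -/
def CascCh (p q : ℕ × ℕ) : Prop := q.2 < p.2 ∨ (q.2 = p.2 ∧ p.1 ≤ q.1)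

/-- `ivs` is the lower-subinterval decomposition of a cascading `n`-sequence. -/
def IsCascDecomp (n : ℕ) (ivs : List (ℕ × ℕ)) : Prop :=
  (∀ p ∈ ivs, IsLowerIv n p) ∧ ivs.Chain' CascCh

/-- The integer sequence determined by a decomposition into lower subintervals. -/
def seqOf (ivs : List (ℕ × ℕ)) : List ℕ :=
  (ivs.map (fun p => lowerInt p.1 p.2)).flatten

/-- `R_k`: the rigged configuration corresponding to `I_1 ⋯ I_k`. -/
noncomputable def Rk (ivs : List (ℕ × ℕ)) (k : ℕ) : RC :=
  RCseq (seqOf (ivs.take k))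

/-- Height of column `c` of (the underlying partition of) a rigged partition. -/
def colHt (ν : RP) (c : ℕ) : ℕ := (ν.filter (fun s => c ≤ s.1)).card

/-- Length of the `i`-th row (1-based) of the underlying partition. -/
def rowLen (ν : RP) (i : ℕ) : ℕ :=
  ((Finset.Icc 1 ((ν.map Prod.fst).sup)).filter (fun c => i ≤ colHt ν c)).card

/-- Length of the uppermost row of length at most `L` (0 for the virtual empty row). -/
def upRowLen (ν : RP) (L : ℕ) : ℕ := rowLen ν (colHt ν (L + 1) + 1)

/-- The column to which an application of `f_a` adds a box. -/
noncomputable def selCol (a : ℕ) (R : RC) : ℕ :=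
  if R a = 0 ∨ 0 < minRig (R a) then 1 else selLen (R a) + 1

/-- Given a lower subinterval `p = (a, m)` acting on `R`, the column to which the
operator `f_l` occurring in it adds a box in the `l`-th partition. -/
noncomputable def ivCol (p : ℕ × ℕ) (l : ℕ) (R : RC) : ℕ :=
  selCol l (fList (lowerInt p.1 (l - 1)) R)

/-- Lengths `|r_a|, |r_{a+1}|, …` of the rows `r_i` of Lemma "snake":
`rLenSeq R a (i - a) = |r_i|`. -/
def rLenSeq (R : RC) (a : ℕ) : ℕ → ℕ
  | 0 => rowLen (R a) 1
  | k + 1 => upRowLen (R (a + k + 1)) (rLenSeq R a k)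


/-! ### toolkit -/

/-- number of rows of length `≥ t`. -/
def cnt (Λ : Multiset ℕ) (t : ℕ) : ℕ := (Λ.filter (fun L => t ≤ L)).card

/-- largest row `≤ c` (0 if none). -/
def maxr (Λ : Multiset ℕ) (c : ℕ) : ℕ := (Λ.filter (fun L => L ≤ c)).sup

lemma sup_mem_of_pos (Λ : Multiset ℕ) (h : 0 < Λ.sup) : Λ.sup ∈ Λ := by
  induction Λ using Multiset.induction with
  | empty => simp at h
  | cons a s ih =>
    rw [Multiset.sup_cons] at h ⊢
    rcases max_cases a s.sup with ⟨he, _⟩ | ⟨he, hlt⟩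
    · rw [he]; exact Multiset.mem_cons_self _ _
    · rw [he] at h ⊢
      exact Multiset.mem_cons_of_mem (ih h)

lemma le_sup {Λ : Multiset ℕ} {L : ℕ} (h : L ∈ Λ) : L ≤ Λ.sup :=
  Multiset.le_sup h

lemma maxr_le (Λ : Multiset ℕ) (c : ℕ) : maxr Λ c ≤ c := by
  unfold maxr
  rw [Multiset.sup_le]
  intro x hx
  exact (Multiset.mem_filter.mp hx).2

lemma le_maxr {Λ : Multiset ℕ} {L c : ℕ} (hL : L ∈ Λ) (hLc : L ≤ c) : L ≤ maxr Λ c :=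
  Multiset.le_sup (Multiset.mem_filter.mpr ⟨hL, hLc⟩)

lemma maxr_mem {Λ : Multiset ℕ} {c : ℕ} (h : 0 < maxr Λ c) : maxr Λ c ∈ Λ := by
  have := sup_mem_of_pos _ h
  exact (Multiset.mem_filter.mp this).1

lemma maxr_sup (Λ : Multiset ℕ) : maxr Λ Λ.sup = Λ.sup := by
  rcases Nat.eq_zero_or_pos Λ.sup with h | h
  · rw [h]
    apply Nat.le_antisymm (maxr_le _ _) (Nat.zero_le _)
  · exact Nat.le_antisymm (maxr_le _ _) (le_maxr (sup_mem_of_pos _ h) le_rfl)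

lemma maxr_pos_of_mem {Λ : Multiset ℕ} {L c : ℕ} (hL : L ∈ Λ) (h1 : 1 ≤ L) (hLc : L ≤ c) :
    0 < maxr Λ c := lt_of_lt_of_le h1 (le_maxr hL hLc)

/-- no rows in `(maxr Λ c, c]`. -/
lemma maxr_gap {Λ : Multiset ℕ} {L c : ℕ} (hL : L ∈ Λ) (h : L ≤ c) : L ≤ maxr Λ c :=
  le_maxr hL h

lemma cnt_mono (Λ : Multiset ℕ) {t t' : ℕ} (h : t ≤ t') : cnt Λ t' ≤ cnt Λ t := by
  apply Multiset.card_le_card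
  apply Multiset.monotone_filter_right
  intro x hx; exact le_trans h hx

lemma cnt_cons (Λ : Multiset ℕ) (x t : ℕ) :
    cnt (x ::ₘ Λ) t = cnt Λ t + (if t ≤ x then 1 else 0) := by
  unfold cnt
  by_cases h : t ≤ x <;> simp [Multiset.filter_cons, h]

lemma cnt_erase_le (Λ : Multiset ℕ) {l : ℕ} (hl : l ∈ Λ) {t : ℕ} (ht : t ≤ l) :
    cnt (Λ.erase l) t + 1 = cnt Λ t := by
  conv_rhs => rw [← Multiset.cons_erase hl]
  rw [cnt_cons, if_pos ht]

lemma cnt_erase_gt (Λ : Multiset ℕ) (l : ℕ) {t : ℕ} (ht : l < t) :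
    cnt (Λ.erase l) t = cnt Λ t := by
  by_cases hl : l ∈ Λ
  · conv_rhs => rw [← Multiset.cons_erase hl]
    rw [cnt_cons, if_neg (by omega)]
    omega
  · rw [Multiset.erase_of_notMem hl]

/-- count is constant between `maxr+1` and `c+1`. -/
lemma cnt_gap (Λ : Multiset ℕ) (c : ℕ) :
    cnt Λ (maxr Λ c + 1) = cnt Λ (c + 1) := by
  unfold cnt
  congr 1
  apply Multiset.filter_congr
  intro L hL
  constructor
  · intro h
    by_contra hc
    push_neg at hc
    have : L ≤ c := by omega
    have := le_maxr hL this
    omega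
  · intro h
    have := maxr_le Λ c
    omega

/-- if strictly more rows `≥ L` than rows `≥ t` (with `L ≤ t`), there is a row in `[L, t)`. -/
lemma exists_row_between {Λ : Multiset ℕ} {L t : ℕ} (hLt : L ≤ t)
    (h : cnt Λ t < cnt Λ L) : ∃ x ∈ Λ, L ≤ x ∧ x < t := by
  by_contra hc
  push_neg at hc
  have : Λ.filter (fun x => L ≤ x) = Λ.filter (fun x => t ≤ x) := by
    apply Multiset.filter_congr
    intro x hx
    constructor
    · intro hh
      by_contra hn
      push_neg at hn
      exact absurd (hc x hx hh) (by push_neg; omega)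
    · intro hh; omega
  unfold cnt at h
  rw [this] at h
  omega

/-! ### minRig / selLen characterizations -/

lemma minRig_le {ν : RP} {s : ℕ × ℤ} (hs : s ∈ ν) : minRig ν ≤ s.2 := by
  have hne : ν ≠ 0 := by rintro rfl; simp at hs
  rw [minRig, dif_neg hne]
  apply Finset.min'_le
  rw [Multiset.mem_toFinset]
  exact Multiset.mem_map_of_mem _ hs

lemma minRig_mem {ν : RP} (hne : ν ≠ 0) : ∃ s ∈ ν, s.2 = minRig ν := by
  rw [minRig, dif_neg hne]
  have := Finset.min'_mem (ν.map Prod.snd).toFinset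
    (Multiset.toFinset_nonempty.mpr (by simpa [Multiset.map_eq_zero] using hne))
  rw [Multiset.mem_toFinset, Multiset.mem_map] at this
  exact this

lemma minRig_eq {ν : RP} {x : ℤ} (h1 : ∀ s ∈ ν, x ≤ s.2) {s₀ : ℕ × ℤ} (hs₀ : s₀ ∈ ν)
    (hx : s₀.2 = x) : minRig ν = x := by
  have hub : minRig ν ≤ x := hx ▸ minRig_le hs₀
  have hne : ν ≠ 0 := by rintro rfl; simp at hs₀
  obtain ⟨s, hs, hsm⟩ := minRig_mem hne
  have := h1 s hs
  omega

lemma selLen_eq {ν : RP} {L : ℕ} {s₀ : ℕ × ℤ} (hs₀ : s₀ ∈ ν) (hs₀r : s₀.2 = minRig ν)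
    (hs₀L : s₀.1 = L) (hub : ∀ s ∈ ν, s.2 = minRig ν → s.1 ≤ L) : selLen ν = L := by
  apply Nat.le_antisymm
  · unfold selLen
    rw [Multiset.sup_le]
    intro x hx
    rw [Multiset.mem_map] at hx
    obtain ⟨s, hs, rfl⟩ := hx
    rw [Multiset.mem_filter] at hs
    exact hub s hs.1 hs.2
  · subst hs₀L
    unfold selLen
    apply Multiset.le_sup
    apply Multiset.mem_map_of_mem
    rw [Multiset.mem_filter]
    exact ⟨hs₀, hs₀r⟩



/-! ### shapes and state descriptions -/

def shp (ν : RP) : Multiset ℕ := ν.map Prod.fst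

lemma mem_shp {ν : RP} {L : ℕ} : L ∈ shp ν ↔ ∃ s ∈ ν, s.1 = L := by
  simp [shp]

/-- all-zero riggings, positive lengths -/
def ZeroReg (ν : RP) : Prop := ∀ s ∈ ν, 1 ≤ s.1 ∧ s.2 = 0

/-- frontier structure -/
def FrontF (ν : RP) (g : ℕ) (xg : ℤ) : Prop :=
  xg < 0 ∧ 1 ≤ g ∧ g ∈ shp ν ∧ ∀ s ∈ ν, 1 ≤ s.1 ∧ xg ≤ s.2 ∧ (g ≤ s.1 → s.2 = xg)

def zeroed (Λ : Multiset ℕ) (l : ℕ) : RP := ((l + 1) ::ₘ Λ.erase l).map (fun L => (L, 0))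

def threeP (Λ : Multiset ℕ) (l : ℕ) : RP :=
  (l + 1, -1) ::ₘ (Λ.erase l).map (fun L => (L, if L ≤ l then 0 else -1))

def bumped (ν : RP) (c : ℕ) : RP :=
  ν.map (fun s => if c < s.1 then (s.1, s.2 + 1) else s)

def fronP (ν : RP) (l : ℕ) (xg : ℤ) : RP :=
  (l + 1, xg - 1) ::ₘ ((ν.erase (l, xg)).map (fun s => if l < s.1 then (s.1, s.2 - 1) else s))

/-- bump with large threshold is identity. -/
lemma bumped_id {ν : RP} {c : ℕ} (h : ∀ s ∈ ν, s.1 ≤ c) : bumped ν c = ν := by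
  unfold bumped
  have : ∀ s ∈ ν, (if c < s.1 then (s.1, s.2 + 1) else s) = id s := by
    intro s hs
    rw [if_neg (by have := h s hs; omega)]
    rfl
  rw [Multiset.map_congr rfl this, Multiset.map_id]

/-! ### cartan values -/

lemma cartan_self (b : ℕ) : cartanA b b = 2 := by simp [cartanA]
lemma cartan_succ (b : ℕ) : cartanA b (b+1) = -1 := by simp [cartanA]
lemma cartan_pred (b : ℕ) : cartanA (b+1) b = -1 := by simp [cartanA]
lemma cartan_far {a b : ℕ} (h : a ≠ b) (h2 : b ≠ a + 1) (h3 : a ≠ b + 1) : cartanA a b = 0 := by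
  simp [cartanA, h, h2, h3]

/-! ### fList / lowerInt -/

lemma fList_append (γ δ : List ℕ) (R : RC) :
    fList (γ ++ δ) R = fList δ (fList γ R) := by
  unfold fList
  rw [List.foldl_append]

lemma fList_snoc (γ : List ℕ) (x : ℕ) (R : RC) :
    fList (γ ++ [x]) R = fOp x (fList γ R) := by
  rw [fList_append]; rfl

lemma lowerInt_eq_range' (a k : ℕ) : lowerInt a (a + k) = List.range' a (k + 1) := by
  unfold lowerInt
  congr 1
  omega

lemma lowerInt_pred (a : ℕ) (ha : 1 ≤ a) : lowerInt a (a - 1) = [] := by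
  unfold lowerInt
  have : a - 1 + 1 - a = 0 := by omega
  rw [this]
  rfl

lemma range'_snoc (a k : ℕ) : List.range' a (k + 1) = List.range' a k ++ [a + k] := by
  induction k generalizing a with
  | zero => simp [List.range']
  | succ k ih =>
    rw [List.range'_succ, ih (a+1), List.range'_succ]
    simp [List.cons_append]
    omega



/-! ### SEL lemmas: selection analysis on a bumped state -/

section SEL
variable {M : RP} {c : ℕ}

lemma bumped_mem {ν : RP} {c : ℕ} {s' : ℕ × ℤ} :
    s' ∈ bumped ν c ↔ ∃ s ∈ ν, (if c < s.1 then (s.1, s.2 + 1) else s) = s' := by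
  simp [bumped]

/-- zero region selection, empty/new-row case -/
lemma SEL_zero_new (hM : ZeroReg M) (hl : maxr (shp M) c = 0) :
    bumped M c = 0 ∨ 0 < minRig (bumped M c) := by
  by_cases he : bumped M c = 0
  · exact Or.inl he
  right
  have hall : ∀ s' ∈ bumped M c, s'.2 = 1 := by
    intro s' hs'
    obtain ⟨s, hs, rfl⟩ := bumped_mem.mp hs'
    have h0 := hM s hs
    have hgt : c < s.1 := by
      by_contra hle
      push_neg at hle
      have : s.1 ≤ maxr (shp M) c := le_maxr (mem_shp.mpr ⟨s, hs, rfl⟩) hle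
      omega
    rw [if_pos hgt]
    simp [h0.2]
  obtain ⟨s, hs, hsm⟩ := minRig_mem he
  rw [← hsm, hall s hs]
  norm_num

/-- zero region, extend case -/
lemma SEL_zero_ext (hM : ZeroReg M) (hl : 0 < maxr (shp M) c) :
    ¬(bumped M c = 0 ∨ 0 < minRig (bumped M c)) ∧
    minRig (bumped M c) = 0 ∧ selLen (bumped M c) = maxr (shp M) c ∧
    (maxr (shp M) c, 0) ∈ M := by
  set l := maxr (shp M) c with hldef
  have hlM : l ∈ shp M := maxr_mem hl
  obtain ⟨s₀, hs₀, hs₀1⟩ := mem_shp.mp hlM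
  have hs₀z := (hM s₀ hs₀).2
  have hs₀eq : s₀ = (l, 0) := by
    cases s₀; simp_all
  have hmem : ((l : ℕ), (0 : ℤ)) ∈ bumped M c := by
    rw [bumped_mem]
    refine ⟨s₀, hs₀, ?_⟩
    rw [hs₀eq, if_neg (by simp; exact maxr_le _ _)]
  have hlb : ∀ s' ∈ bumped M c, (0:ℤ) ≤ s'.2 := by
    intro s' hs'
    obtain ⟨s, hs, rfl⟩ := bumped_mem.mp hs'
    have h0 := (hM s hs).2
    split <;> simp [h0]
  have hmin : minRig (bumped M c) = 0 := minRig_eq hlb hmem rfl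
  refine ⟨?_, hmin, ?_, hs₀eq ▸ hs₀⟩
  · rintro (he | hpos)
    · rw [he] at hmem; simp at hmem
    · omega
  · apply selLen_eq hmem (by simp [hmin]) rfl
    intro s' hs' hs'r
    obtain ⟨s, hs, rfl⟩ := bumped_mem.mp hs'
    have h0 := (hM s hs).2
    rw [hmin] at hs'r
    by_cases hgt : c < s.1
    · rw [if_pos hgt] at hs'r ⊢
      simp [h0] at hs'r
    · rw [if_neg hgt] at hs'r ⊢
      push_neg at hgt
      exact le_maxr (mem_shp.mpr ⟨s, hs, rfl⟩) hgt

/-- frontier selection -/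
lemma SEL_front {g : ℕ} {xg : ℤ} (hF : FrontF M g xg) (hc : g ≤ c) :
    ¬(bumped M c = 0 ∨ 0 < minRig (bumped M c)) ∧
    minRig (bumped M c) = xg ∧ selLen (bumped M c) = maxr (shp M) c ∧
    g ≤ maxr (shp M) c ∧ (maxr (shp M) c, xg) ∈ M := by
  obtain ⟨hxg, hg1, hgM, hall⟩ := hF
  set l := maxr (shp M) c with hldef
  have hgl : g ≤ l := le_maxr hgM hc
  have hl : 0 < l := by omega
  have hlM : l ∈ shp M := maxr_mem hl
  obtain ⟨s₀, hs₀, hs₀1⟩ := mem_shp.mp hlM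
  have hs₀x : s₀.2 = xg := (hall s₀ hs₀).2.2 (by omega)
  have hs₀eq : s₀ = (l, xg) := by cases s₀; simp_all
  have hmem : ((l : ℕ), xg) ∈ bumped M c := by
    rw [bumped_mem]
    refine ⟨s₀, hs₀, ?_⟩
    rw [hs₀eq, if_neg (by simp; exact maxr_le _ _)]
  have hlb : ∀ s' ∈ bumped M c, xg ≤ s'.2 := by
    intro s' hs'
    obtain ⟨s, hs, rfl⟩ := bumped_mem.mp hs'
    have h0 := (hall s hs).2.1
    split <;> simp <;> omega
  have hmin : minRig (bumped M c) = xg := minRig_eq hlb hmem rfl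
  refine ⟨?_, hmin, ?_, hgl, hs₀eq ▸ hs₀⟩
  · rintro (he | hpos)
    · rw [he] at hmem; simp at hmem
    · omega
  · apply selLen_eq hmem (by simp [hmin]) rfl
    intro s' hs' hs'r
    obtain ⟨s, hs, rfl⟩ := bumped_mem.mp hs'
    rw [hmin] at hs'r
    by_cases hgt : c < s.1
    · -- bumped string with rig xg: orig rig xg - 1 < xg: but s.1 > c ≥ g → rig = xg: contra
      rw [if_pos hgt] at hs'r
      simp at hs'r
      have := (hall s hs).2.2 (by omega)
      omega
    · rw [if_neg hgt] at hs'r ⊢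
      push_neg at hgt
      exact le_maxr (mem_shp.mpr ⟨s, hs, rfl⟩) hgt

end SEL

/-! ### fOp evaluation -/

section FOPEVAL
variable {T : RC} {b : ℕ}

/-- case 2 (extend) evaluation -/
lemma fOp_ext (h : ¬(T b = 0 ∨ 0 < minRig (T b))) (j : ℕ) :
    fOp b T j = (if j = b then ({(selLen (T b) + 1, minRig (T b) - 1)} : RP) else 0)
      + ((if j = b then (T b).erase (selLen (T b), minRig (T b)) else T j).map
          (fun s => if selLen (T b) < s.1 then (s.1, s.2 - cartanA b j) else s)) := by
  rw [fOp, if_neg h]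

/-- case 1 (new row) evaluation -/
lemma fOp_new (h : T b = 0 ∨ 0 < minRig (T b)) (j : ℕ) :
    fOp b T j = (if j = b then ({(1, -1)} : RP) else 0)
      + (T j).map (fun s => if 0 < s.1 then (s.1, s.2 - cartanA b j) else s) := by
  rw [fOp, if_pos h]

/-- indices not adjacent to `b` are unchanged -/
lemma fOp_far {j : ℕ} (hj1 : j ≠ b) (hj2 : j ≠ b + 1) (hj3 : b ≠ j + 1) :
    fOp b T j = T j := by
  have hc : cartanA b j = 0 := by
    apply (by simp [cartanA, *] : b ≠ j → j ≠ b + 1 → b ≠ j + 1 → cartanA b j = 0)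
    · exact fun hh => hj1 hh.symm
    · exact hj2
    · exact hj3
  have hmap : ∀ (ν : RP) (p : ℕ × ℤ → Prop) [DecidablePred p],
      ν.map (fun s => if p s then (s.1, s.2 - cartanA b j) else s) = ν := by
    intro ν p _
    have : ∀ s ∈ ν, (if p s then (s.1, s.2 - cartanA b j) else s) = id s := by
      intro s hs
      rw [hc]
      split <;> simp
    rw [Multiset.map_congr rfl this, Multiset.map_id]
  by_cases h : T b = 0 ∨ 0 < minRig (T b)
  · rw [fOp_new h, if_neg hj1, zero_add, hmap]
  · rw [fOp_ext h, if_neg hj1, zero_add, if_neg hj1, hmap]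

end FOPEVAL


/-! ### shp computations -/

lemma shp_cons (s : ℕ × ℤ) (ν : RP) : shp (s ::ₘ ν) = s.1 ::ₘ shp ν := by
  simp [shp]

lemma shp_erase {ν : RP} {s : ℕ × ℤ} (hs : s ∈ ν) :
    shp (ν.erase s) = (shp ν).erase s.1 := by
  obtain ⟨rest, rfl⟩ : ∃ rest, ν = s ::ₘ rest := ⟨ν.erase s, (Multiset.cons_erase hs).symm⟩
  rw [Multiset.erase_cons_head, shp_cons, Multiset.erase_cons_head]

lemma shp_threeP (Λ : Multiset ℕ) (l : ℕ) : shp (threeP Λ l) = (l + 1) ::ₘ Λ.erase l := by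
  simp [threeP, shp, Multiset.map_map]

lemma shp_zeroed (Λ : Multiset ℕ) (l : ℕ) : shp (zeroed Λ l) = (l + 1) ::ₘ Λ.erase l := by
  simp [zeroed, shp, Multiset.map_map]

lemma shp_fronP {ν : RP} {l : ℕ} {xg : ℤ} (h : (l, xg) ∈ ν) :
    shp (fronP ν l xg) = (l + 1) ::ₘ (shp ν).erase l := by
  rw [fronP, shp_cons]
  congr 1
  rw [← shp_erase h]
  unfold shp
  rw [Multiset.map_map]
  apply Multiset.map_congr rfl
  intro s _
  by_cases hls : l < s.1 <;> simp [hls]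

lemma shp_bumped (ν : RP) (c : ℕ) : shp (bumped ν c) = shp ν := by
  rw [bumped, shp, Multiset.map_map, shp]
  apply Multiset.map_congr rfl
  intro s _
  by_cases hls : c < s.1 <;> simp [hls]

/-! ### colHt computations -/

lemma colHt_eq_cnt (ν : RP) (c : ℕ) : colHt ν c = cnt (shp ν) c := by
  unfold colHt cnt shp
  induction ν using Multiset.induction with
  | empty => simp
  | cons s t ih =>
    rw [Multiset.map_cons, Multiset.filter_cons, Multiset.filter_cons]
    by_cases h : c ≤ s.1 <;> simp [h, ih]

lemma colHt_threeP (Λ : Multiset ℕ) (l : ℕ) :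
    colHt (threeP Λ l) (l + 1) = cnt Λ (l + 1) + 1 := by
  rw [colHt_eq_cnt, shp_threeP, cnt_cons, if_pos le_rfl, cnt_erase_gt _ _ (by omega)]

lemma colHt_fronP {ν : RP} {l : ℕ} {xg : ℤ} (h : (l, xg) ∈ ν) :
    colHt (fronP ν l xg) (l + 1) = cnt (shp ν) (l + 1) + 1 := by
  rw [colHt_eq_cnt, shp_fronP h, cnt_cons, if_pos le_rfl, cnt_erase_gt _ _ (by omega)]

/-! ### core computations -/

section CORE
variable {R T : RC} {b c : ℕ}

/-- selCol value, zero region -/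
lemma selCol_coreZ (hZ : ZeroReg (R b)) (hTb : T b = bumped (R b) c) :
    selCol b T = maxr (shp (R b)) c + 1 := by
  rcases Nat.eq_zero_or_pos (maxr (shp (R b)) c) with h0 | hpos
  · rw [selCol, hTb, if_pos (SEL_zero_new hZ h0), h0]
  · obtain ⟨hcond, _, hsel, _⟩ := SEL_zero_ext hZ hpos
    rw [selCol, hTb, if_neg hcond, hsel]

/-- selCol value, frontier -/
lemma selCol_coreF {g : ℕ} {xg : ℤ} (hF : FrontF (R b) g xg) (hgc : g ≤ c)
    (hTb : T b = bumped (R b) c) :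
    selCol b T = maxr (shp (R b)) c + 1 := by
  obtain ⟨hcond, _, hsel, _, _⟩ := SEL_front hF hgc
  rw [selCol, hTb, if_neg hcond, hsel]

/-- the three parts of the core: action of `fOp b` on a suitably bumped state.
zero-region version. `l` is the selected length. -/
theorem coreZ (hZ : ZeroReg (R b)) (hTb : T b = bumped (R b) c)
    (hgap : ∀ s ∈ R b, s.1 ≤ c → s.1 ≤ maxr (shp (R b)) c) :
    fOp b T b = threeP (shp (R b)) (maxr (shp (R b)) c) ∧
    (∀ j, j ≠ b → fOp b T j
      = (T j).map (fun s =>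
          if maxr (shp (R b)) c < s.1 then (s.1, s.2 - cartanA b j) else s)) := by
  set l := maxr (shp (R b)) c with hl
  rcases Nat.eq_zero_or_pos l with h0 | hpos
  · -- new-row case
    have hcond := SEL_zero_new hZ (hl ▸ h0)
    constructor
    · rw [← hTb] at hcond
      rw [fOp_new hcond b, if_pos rfl, cartan_self]
      rw [threeP]
      have h0' : (shp (R b)).erase 0 = shp (R b) := by
        apply Multiset.erase_of_notMem
        intro hm
        obtain ⟨s, hs, hs1⟩ := mem_shp.mp hm
        have := (hZ s hs).1; omega
      rw [h0, h0', ← Multiset.singleton_add]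
      congr 1
      rw [hTb, bumped, Multiset.map_map, shp, Multiset.map_map]
      apply Multiset.map_congr rfl
      intro s hs
      obtain ⟨h1, h2⟩ := hZ s hs
      have hcs : c < s.1 := by
        by_contra hh
        push_neg at hh
        have := hgap s hs hh
        omega
      simp only [Function.comp_apply, if_pos hcs]
      rw [if_pos (show (0:ℕ) < s.1 by omega)]
      rw [if_neg (by omega : ¬ s.1 ≤ 0)]
      refine congrArg (Prod.mk s.1) ?_
      rw [h2]; norm_num
    · intro j hj
      rw [← hTb] at hcond
      rw [fOp_new hcond j, if_neg hj, zero_add]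
      apply Multiset.map_congr rfl
      intro s hs
      by_cases hls : l < s.1
      · rw [if_pos hls, if_pos (by omega)]
      · rw [if_neg hls, if_neg (by omega)]
  · -- extend case
    obtain ⟨hcond, hmin, hsel, hmem⟩ := SEL_zero_ext hZ (hl ▸ hpos)
    rw [← hTb] at hcond hmin hsel
    constructor
    · rw [fOp_ext hcond b, if_pos rfl, if_pos rfl, cartan_self, hmin, hsel, ← hl]
      rw [threeP, ← Multiset.singleton_add]
      have hh : (0:ℤ) - 1 = -1 := by norm_num
      rw [hh]
      congr 1
      -- (T b).erase (l, 0) = bumped rest c, where R b = (l,0) ::ₘ rest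
      obtain ⟨rest, hrest⟩ : ∃ rest, R b = (l, 0) ::ₘ rest :=
        ⟨(R b).erase (l, 0), (Multiset.cons_erase hmem).symm⟩
      have hTb' : T b = (l, (0:ℤ)) ::ₘ bumped rest c := by
        have hlc : l ≤ c := hl ▸ maxr_le _ _
        rw [hTb, hrest, bumped, Multiset.map_cons,
          if_neg (show ¬ c < ((l, (0:ℤ)) : ℕ × ℤ).1 by omega)]
        rfl
      rw [hTb', Multiset.erase_cons_head]
      have hshp : (shp (R b)).erase l = shp rest := by
        rw [hrest, shp_cons, Multiset.erase_cons_head]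
      rw [hshp, bumped, Multiset.map_map, shp, Multiset.map_map]
      apply Multiset.map_congr rfl
      intro s hs
      have hsR : s ∈ R b := by rw [hrest]; exact Multiset.mem_cons_of_mem hs
      obtain ⟨h1, h2⟩ := hZ s hsR
      by_cases hcs : c < s.1
      · have hlc : l ≤ c := hl ▸ maxr_le _ _
        simp only [Function.comp_apply, if_pos hcs]
        rw [if_pos (show l < (s.1, s.2 + 1).1 by omega)]
        rw [if_neg (by omega : ¬ s.1 ≤ l)]
        refine congrArg (Prod.mk s.1) ?_
        rw [h2]; norm_num
      · push_neg at hcs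
        have hsl : s.1 ≤ l := hgap s hsR hcs
        simp only [Function.comp_apply, if_neg (by omega : ¬ c < s.1)]
        rw [if_neg (by omega), if_pos hsl]
        rw [← h2]
    · intro j hj
      rw [fOp_ext hcond j, if_neg hj, if_neg hj, zero_add, hsel, ← hl]

/-- frontier version -/
theorem coreF {g : ℕ} {xg : ℤ} (hF : FrontF (R b) g xg) (hgc : g ≤ c)
    (hTb : T b = bumped (R b) c)
    (hgap : ∀ s ∈ R b, s.1 ≤ c → s.1 ≤ maxr (shp (R b)) c) :
    fOp b T b = fronP (R b) (maxr (shp (R b)) c) xg ∧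
    (∀ j, j ≠ b → fOp b T j
      = (T j).map (fun s =>
          if maxr (shp (R b)) c < s.1 then (s.1, s.2 - cartanA b j) else s)) := by
  set l := maxr (shp (R b)) c with hl
  obtain ⟨hcond, hmin, hsel, hgl, hmem⟩ := SEL_front hF hgc
  rw [← hTb] at hcond hmin hsel
  constructor
  · rw [fOp_ext hcond b, if_pos rfl, if_pos rfl, cartan_self, hmin, hsel, ← hl]
    rw [fronP, ← Multiset.singleton_add]
    congr 1
    obtain ⟨rest, hrest⟩ : ∃ rest, R b = (l, xg) ::ₘ rest :=
      ⟨(R b).erase (l, xg), (Multiset.cons_erase hmem).symm⟩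
    have hTb' : T b = (l, xg) ::ₘ bumped rest c := by
      have hlc : l ≤ c := hl ▸ maxr_le _ _
      rw [hTb, hrest, bumped, Multiset.map_cons,
        if_neg (show ¬ c < ((l, xg) : ℕ × ℤ).1 by omega)]
      rfl
    rw [hTb', Multiset.erase_cons_head, hrest, Multiset.erase_cons_head]
    rw [bumped, Multiset.map_map]
    apply Multiset.map_congr rfl
    intro s hs
    have hsR : s ∈ R b := by rw [hrest]; exact Multiset.mem_cons_of_mem hs
    by_cases hcs : c < s.1
    · have hlc : l ≤ c := hl ▸ maxr_le _ _
      simp only [Function.comp_apply, if_pos hcs]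
      rw [if_pos (show l < (s.1, s.2 + 1).1 by omega)]
      rw [if_pos (by omega : l < s.1)]
      refine congrArg (Prod.mk s.1) ?_
      ring
    · push_neg at hcs
      have hsl : s.1 ≤ l := hgap s hsR hcs
      simp only [Function.comp_apply, if_neg (by omega : ¬ c < s.1)]
      rw [if_neg (by omega), if_neg (by omega)]
  · intro j hj
    rw [fOp_ext hcond j, if_neg hj, if_neg hj, zero_add, hsel, ← hl]

end CORE


/-! ### interlacing -/

def Ilace (μ ν : Multiset ℕ) : Prop :=
  ∀ t, 1 ≤ t → cnt ν t ≤ cnt μ t + 1 ∧ cnt μ t ≤ cnt ν t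

lemma cnt_lower {X : Multiset ℕ} {x L l : ℕ} (hx : x ∈ X) (h1 : L ≤ x) (h2 : x ≤ l) :
    cnt X (l + 1) + 1 ≤ cnt X L := by
  obtain ⟨X', rfl⟩ : ∃ X', X = x ::ₘ X' := ⟨X.erase x, (Multiset.cons_erase hx).symm⟩
  rw [cnt_cons, cnt_cons, if_pos h1, if_neg (by omega)]
  have := cnt_mono X' (show L ≤ l + 1 by omega)
  omega

lemma cnt_sup_succ (Λ : Multiset ℕ) : cnt Λ (Λ.sup + 1) = 0 := by
  unfold cnt
  rw [Multiset.card_eq_zero, Multiset.filter_eq_nil]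
  intro L hL
  have := le_sup hL
  omega

/-- the W lemma: rows of `μ` below the selected row `maxr μ c` are at most
the next selection `maxr ν (maxr μ c)`. -/
lemma Wlem {μ ν : Multiset ℕ} (hI : Ilace μ ν) (c : ℕ) {L : ℕ}
    (hL : L ∈ μ.erase (maxr μ c)) (h1 : 1 ≤ L) (hLl : L ≤ maxr μ c) :
    L ≤ maxr ν (maxr μ c) := by
  set l := maxr μ c with hl
  have hlμ : l ∈ μ := maxr_mem (by omega)
  have hLμ : cnt μ L ≥ cnt μ (l + 1) + 2 := by
    have e1 : cnt (μ.erase l) L + 1 = cnt μ L := cnt_erase_le μ hlμ hLl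
    have e2 : cnt (μ.erase l) (l+1) + 1 ≤ cnt (μ.erase l) L := cnt_lower hL le_rfl hLl
    have e3 : cnt (μ.erase l) (l+1) = cnt μ (l+1) := cnt_erase_gt μ l (by omega)
    omega
  have hν : cnt ν (l + 1) < cnt ν L := by
    have i1 := (hI L h1).2
    have i2 := (hI (l+1) (by omega)).1
    omega
  obtain ⟨x, hx, hx1, hx2⟩ := exists_row_between (show L ≤ l + 1 by omega) hν
  exact le_trans hx1 (le_maxr hx (by omega))

/-- updated shape after adding a box to the row of length `l` -/
lemma cnt_update {Λ : Multiset ℕ} {l : ℕ} (hl : l ∈ Λ ∨ l = 0) (h0 : (0:ℕ) ∉ Λ)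
    {t : ℕ} (ht : 1 ≤ t) :
    cnt ((l + 1) ::ₘ Λ.erase l) t = cnt Λ t + (if t = l + 1 then 1 else 0) := by
  rcases hl with hl | rfl
  · rw [cnt_cons]
    rcases Nat.lt_trichotomy t (l+1) with h | h | h
    · rw [if_pos (by omega), if_neg (by omega)]
      have := cnt_erase_le Λ hl (show t ≤ l by omega)
      omega
    · subst h
      rw [if_pos le_rfl, if_pos rfl, cnt_erase_gt _ _ (by omega)]
    · rw [if_neg (by omega), if_neg (by omega), cnt_erase_gt _ _ (by omega)]
  · rw [Multiset.erase_of_notMem (by simpa using h0), cnt_cons]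
    by_cases h : t = 1
    · subst h; simp
    · rw [if_neg (by omega), if_neg (by omega)]

/-- interlacing is preserved by a snake step (inner pair) -/
lemma Ilace_step {μ ν : Multiset ℕ} (hI : Ilace μ ν) {l : ℕ}
    (hlμ : l ∈ μ ∨ l = 0) (h0μ : (0:ℕ) ∉ μ) (h0ν : (0:ℕ) ∉ ν) :
    Ilace ((l + 1) ::ₘ μ.erase l) ((maxr ν l + 1) ::ₘ ν.erase (maxr ν l)) := by
  set l' := maxr ν l with hl'
  have hl'l : l' ≤ l := maxr_le _ _
  have hl'ν : l' ∈ ν ∨ l' = 0 := by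
    rcases Nat.eq_zero_or_pos l' with h | h
    · exact Or.inr h
    · exact Or.inl (maxr_mem h)
  intro t ht
  rw [cnt_update hlμ h0μ ht, cnt_update hl'ν h0ν ht]
  have gap : cnt ν (l' + 1) = cnt ν (l + 1) := cnt_gap ν l
  constructor
  · -- cnt ν' t ≤ cnt μ' t + 1
    by_cases h : t = l' + 1
    · have h3 : cnt ν t = cnt ν (l + 1) := by rw [h]; exact gap
      rw [if_pos h]
      have i1 := (hI (l+1) (by omega)).1
      by_cases he : t = l + 1
      · rw [if_pos he]
        have h5 : cnt μ t = cnt μ (l+1) := by rw [he]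
        omega
      · rw [if_neg he]
        have hlpos : 0 < l := by omega
        have hlin : l ∈ μ := hlμ.resolve_right (by omega)
        have h4 : cnt μ (l+1) + 1 ≤ cnt μ t := cnt_lower hlin (by omega) le_rfl
        omega
    · rw [if_neg h]
      have i1 := (hI t ht).1
      split <;> omega
  · -- cnt μ' t ≤ cnt ν' t
    by_cases h : t = l + 1
    · rw [if_pos h]
      by_cases he : l' = l
      · rw [if_pos (by omega)]
        have h5 : cnt μ t = cnt μ (l+1) := by rw [h]
        have h6 : cnt ν t = cnt ν (l+1) := by rw [h]
        have := (hI (l+1) (by omega)).2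
        omega
      · rw [if_neg (by omega)]
        have hlpos : 0 < l := by omega
        have hlin : l ∈ μ := hlμ.resolve_right (by omega)
        by_contra hcon
        push_neg at hcon
        have i2 := (hI (l+1) (by omega)).2
        have h5 : cnt μ t = cnt μ (l+1) := by rw [h]
        have h6 : cnt ν t = cnt ν (l+1) := by rw [h]
        have heq : cnt ν (l+1) = cnt μ (l+1) := by omega
        have h3 : cnt μ (l+1) + 1 ≤ cnt μ l := cnt_lower hlin le_rfl le_rfl
        have h4 := (hI l (by omega)).2
        have h7 : cnt ν (l+1) < cnt ν l := by omega
        obtain ⟨x, hx, hx1, hx2⟩ := exists_row_between (show l ≤ l + 1 by omega) h7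
        have hxl : x = l := by omega
        have : l ≤ l' := by rw [hl']; exact le_maxr (hxl ▸ hx) le_rfl
        omega
    · rw [if_neg h]
      have i2 := (hI t ht).2
      split <;> omega

/-- interlacing preserved at the start edge (only `ν` is updated, with its top row) -/
lemma Ilace_edge {μ ν : Multiset ℕ} (hI : Ilace μ ν) (h0ν : (0:ℕ) ∉ ν) :
    Ilace μ ((ν.sup + 1) ::ₘ ν.erase ν.sup) := by
  have hsν : ν.sup ∈ ν ∨ ν.sup = 0 := by
    rcases Nat.eq_zero_or_pos ν.sup with h | h
    · exact Or.inr h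
    · exact Or.inl (sup_mem_of_pos _ h)
  intro t ht
  rw [cnt_update hsν h0ν ht]
  constructor
  · by_cases h : t = ν.sup + 1
    · subst h
      rw [if_pos rfl, cnt_sup_succ]
      omega
    · rw [if_neg h]
      exact (hI t ht).1
  · have := (hI t ht).2
    split <;> omega

/-! ### the snake -/

def ell (R : RC) (a : ℕ) : ℕ → ℕ
  | 0 => (shp (R a)).sup
  | k+1 => maxr (shp (R (a + k + 1))) (ell R a k)

lemma ell_zero (R : RC) (a : ℕ) : ell R a 0 = (shp (R a)).sup := rfl
lemma ell_succ (R : RC) (a k : ℕ) : ell R a (k+1) = maxr (shp (R (a+k+1))) (ell R a k) := rfl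

lemma ell_is_maxr (R : RC) (a k : ℕ) : ∃ c, ell R a k = maxr (shp (R (a+k))) c := by
  cases k with
  | zero => exact ⟨(shp (R a)).sup, (maxr_sup _).symm⟩
  | succ k => exact ⟨ell R a k, rfl⟩

structure Good (R : RC) (a m : ℕ) : Prop where
  ha : 1 ≤ a
  ham : a ≤ m
  dfact : ∀ s ∈ R (a-1), s.1 ≤ (shp (R a)).sup
  zero : ∀ j, a ≤ j → j < m → ZeroReg (R j)
  zfront : ZeroReg (R m) ∨
    ∃ gs : ℕ → ℕ, (∀ j, a ≤ j → j ≤ m → gs j ∈ shp (R j)) ∧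
      (∀ j, a ≤ j → j < m → gs (j+1) ≤ gs j) ∧ ∃ xg, FrontF (R m) (gs m) xg
  ilace : ∀ j, a ≤ j → j < m → Ilace (shp (R j)) (shp (R (j+1)))

lemma Good.pos {R : RC} {a m : ℕ} (hG : Good R a m) (j : ℕ) (h1 : a ≤ j) (h2 : j ≤ m) :
    ∀ s ∈ R j, 1 ≤ s.1 := by
  rcases Nat.lt_or_ge j m with h | h
  · intro s hs; exact (hG.zero j h1 h s hs).1
  · have hjm : j = m := by omega
    subst hjm
    rcases hG.zfront with hz | ⟨gs, _, _, xg, hF⟩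
    · intro s hs; exact (hz s hs).1
    · intro s hs; exact (hF.2.2.2 s hs).1

lemma Good.zero_notmem {R : RC} {a m : ℕ} (hG : Good R a m) (j : ℕ)
    (h1 : a ≤ j) (h2 : j ≤ m) : (0:ℕ) ∉ shp (R j) := by
  intro hm
  obtain ⟨s, hs, hs1⟩ := mem_shp.mp hm
  have := hG.pos j h1 h2 s hs
  omega

/-- riding lemma : the snake stays at least as high as the fresh rows -/
lemma riding {R : RC} {a m : ℕ} (gs : ℕ → ℕ)
    (hmem : ∀ j, a ≤ j → j ≤ m → gs j ∈ shp (R j))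
    (hdec : ∀ j, a ≤ j → j < m → gs (j+1) ≤ gs j) :
    ∀ k, a + k ≤ m → gs (a+k) ≤ ell R a k := by
  intro k
  induction k with
  | zero =>
    intro h
    exact le_sup (hmem a le_rfl (by omega))
  | succ k ih =>
    intro h
    have h1 : gs (a+k+1) ≤ gs (a+k) := hdec (a+k) (by omega) (by omega)
    have h2 := ih (by omega)
    show gs (a+k+1) ≤ maxr (shp (R (a+k+1))) (ell R a k)
    exact le_maxr (hmem (a+k+1) (by omega) (by omega)) (by omega)

/-- counter-bump turns `threeP` into `zeroed` (the W argument) -/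
lemma threeP_bump {Λ Λ' : Multiset ℕ} (hI : Ilace Λ Λ') {c : ℕ} (h0 : (0:ℕ) ∉ Λ) :
    (threeP Λ (maxr Λ c)).map
      (fun s => if maxr Λ' (maxr Λ c) < s.1 then (s.1, s.2 + 1) else s)
      = zeroed Λ (maxr Λ c) := by
  set l := maxr Λ c with hl
  set l' := maxr Λ' l with hl'
  have hl'l : l' ≤ l := maxr_le _ _
  rw [threeP, zeroed, Multiset.map_cons, Multiset.map_cons, Multiset.map_map]
  rw [if_pos (show l' < ((l + 1, (-1:ℤ))).1 by omega)]
  rw [show (((l + 1, (-1:ℤ))).1, ((l + 1, (-1:ℤ))).2 + 1) = ((l+1 : ℕ), (0:ℤ)) from by norm_num]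
  congr 1
  · apply Multiset.map_congr rfl
    intro L hL
    have h1L : 1 ≤ L := by
      have hmem : L ∈ Λ := Multiset.mem_of_mem_erase hL
      rcases Nat.eq_zero_or_pos L with h | h
      · exact absurd (h ▸ hmem) h0
      · exact h
    simp only [Function.comp_apply]
    by_cases hLl : L ≤ l
    · have hW : L ≤ l' := Wlem hI c hL h1L hLl
      rw [if_pos hLl]
      rw [if_neg (show ¬ l' < ((L, (0:ℤ))).1 by omega)]
    · rw [if_neg hLl]
      rw [if_pos (show l' < ((L, (-1:ℤ))).1 by omega)]
      norm_num

/-! ### the mid-state induction -/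

section MID
variable {R : RC} {a m : ℕ}

/-- `midA`: description of the state while the snake is in the zero region. -/
theorem midA (hG : Good R a m) :
    ∀ k, (a + k < m ∨ (a + k = m ∧ ZeroReg (R m))) →
    (∀ j, j < a → fList (List.range' a (k+1)) R j = R j) ∧
    (∀ j, a ≤ j → j < a + k →
      fList (List.range' a (k+1)) R j = zeroed (shp (R j)) (ell R a (j - a))) ∧
    (fList (List.range' a (k+1)) R (a+k) = threeP (shp (R (a+k))) (ell R a k)) ∧
    (fList (List.range' a (k+1)) R (a+k+1) = bumped (R (a+k+1)) (ell R a k)) ∧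
    (∀ j, a+k+1 < j → fList (List.range' a (k+1)) R j = R j) := by
  intro k
  induction k with
  | zero =>
    intro hk
    simp only [Nat.add_zero]
    have hfl : fList (List.range' a (0+1)) R = fOp a R := rfl
    have hZ : ZeroReg (R a) := by
      rcases hk with h | ⟨h, hz⟩
      · exact hG.zero a le_rfl (by omega)
      · have haeq : a = m := by omega
        rw [haeq]; exact hz
    have hTb : R a = bumped (R a) ((shp (R a)).sup) := by
      rw [bumped_id]
      intro s hs
      exact le_sup (mem_shp.mpr ⟨s, hs, rfl⟩)
    have hgap : ∀ s ∈ R a, s.1 ≤ (shp (R a)).sup → s.1 ≤ maxr (shp (R a)) ((shp (R a)).sup) :=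
      fun s hs hsc => le_maxr (mem_shp.mpr ⟨s, hs, rfl⟩) hsc
    obtain ⟨hcur, hoth⟩ := coreZ hZ hTb hgap
    refine ⟨?_, by omega, ?_, ?_, ?_⟩
    · -- low
      intro j hj
      rcases Nat.lt_or_ge j (a-1) with hj2 | hj2
      · rw [hfl]
        exact fOp_far (by omega) (by omega) (by omega)
      · have hj3 : j = a - 1 := by omega
        subst hj3
        rw [hfl, hoth (a-1) (by omega)]
        have hca : cartanA a (a-1) = -1 := by
          have : a = (a-1) + 1 := by omega
          rw [this]
          exact cartan_pred (a-1)
        have : ∀ s ∈ R (a-1),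
            (if maxr (shp (R a)) ((shp (R a)).sup) < s.1
              then (s.1, s.2 - cartanA a (a-1)) else s) = id s := by
          intro s hs
          rw [if_neg]
          · rfl
          · have h1 := hG.dfact s hs
            rw [maxr_sup]
            omega
        rw [Multiset.map_congr rfl this, Multiset.map_id]
    · -- cur
      rw [hfl, hcur, maxr_sup]
      rfl
    · -- nxt
      rw [hfl, hoth (a+1) (by omega), maxr_sup, cartan_succ]
      apply Multiset.map_congr rfl
      intro s hs
      rw [ell_zero]
      split
      · rw [sub_neg_eq_add]
      · rfl
    · -- high
      intro j hj
      rw [hfl]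
      exact fOp_far (by omega) (by omega) (by omega)
  | succ k ih =>
    intro hk
    have hk' : a + k < m := by rcases hk with h | ⟨h, _⟩ <;> omega
    obtain ⟨ilow, imid, icur, inxt, ihigh⟩ := ih (Or.inl hk')
    set b := a + k + 1 with hb
    have hfl : fList (List.range' a (k+1+1)) R = fOp b (fList (List.range' a (k+1)) R) := by
      rw [range'_snoc a (k+1), fList_snoc]
      rfl
    set T := fList (List.range' a (k+1)) R with hT
    have hZ : ZeroReg (R b) := by
      rcases Nat.lt_or_ge b m with h | h
      · exact hG.zero b (by omega) h
      · have hbm : b = m := by rcases hk with h2 | ⟨h2, _⟩ <;> omega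
        rcases hk with h2 | ⟨h2, hz⟩
        · omega
        · exact hbm ▸ hz
    have hgap : ∀ s ∈ R b, s.1 ≤ ell R a k → s.1 ≤ maxr (shp (R b)) (ell R a k) :=
      fun s hs hsc => le_maxr (mem_shp.mpr ⟨s, hs, rfl⟩) hsc
    obtain ⟨hcur, hoth⟩ := coreZ hZ inxt hgap
    have hellb : maxr (shp (R b)) (ell R a k) = ell R a (k+1) := rfl
    refine ⟨?_, ?_, ?_, ?_, ?_⟩
    · -- low
      intro j hj
      rw [hfl]
      rw [fOp_far (by omega) (by omega) (by omega)]
      exact ilow j hj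
    · -- mid
      intro j hj1 hj2
      rcases Nat.lt_or_ge j (a+k) with hj3 | hj3
      · rw [hfl, fOp_far (by omega) (by omega) (by omega)]
        exact imid j hj1 hj3
      · have hj4 : j = a + k := by omega
        subst hj4
        rw [hfl, hoth (a+k) (by omega), icur]
        have hjk : a + k - a = k := by omega
        rw [hjk]
        obtain ⟨c, hc⟩ := ell_is_maxr R a k
        have hI := hG.ilace (a+k) (by omega) hk'
        have h0 := hG.zero_notmem (a+k) (by omega) (by omega)
        have hca : cartanA b (a+k) = -1 := cartan_pred (a+k)
        rw [hca]
        have hmapeq : ∀ s ∈ threeP (shp (R (a+k))) (ell R a k),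
            (if maxr (shp (R b)) (ell R a k) < s.1 then (s.1, s.2 - (-1)) else s)
            = (if maxr (shp (R b)) (ell R a k) < s.1 then (s.1, s.2 + 1) else s) := by
          intro s _
          split
          · rw [sub_neg_eq_add]
          · rfl
        rw [Multiset.map_congr rfl hmapeq, hc]
        exact threeP_bump hI h0
    · -- cur
      rw [hfl]
      show fOp b T b = threeP (shp (R b)) (ell R a (k+1))
      rw [hcur, hellb]
    · -- nxt
      rw [hfl]
      show fOp b T (b+1) = bumped (R (b+1)) (ell R a (k+1))
      rw [hoth (b+1) (by omega), ihigh (b+1) (by omega), cartan_succ, hellb]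
      apply Multiset.map_congr rfl
      intro s hs
      split
      · rw [sub_neg_eq_add]
      · rfl
    · -- high
      intro j hj
      rw [hfl, fOp_far (by omega) (by omega) (by omega)]
      exact ihigh j (by omega)

/-- `midF`: the final state when the frontier at `m` is genuine. -/
theorem midF (hG : Good R a m) (gs : ℕ → ℕ) (xg : ℤ)
    (hmem : ∀ j, a ≤ j → j ≤ m → gs j ∈ shp (R j))
    (hdec : ∀ j, a ≤ j → j < m → gs (j+1) ≤ gs j)
    (hF : FrontF (R m) (gs m) xg) :
    (∀ j, j < a → fList (List.range' a (m - a + 1)) R j = R j) ∧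
    (∀ j, a ≤ j → j < m →
      fList (List.range' a (m - a + 1)) R j = zeroed (shp (R j)) (ell R a (j - a))) ∧
    (fList (List.range' a (m - a + 1)) R m = fronP (R m) (ell R a (m - a)) xg) ∧
    ((ell R a (m - a), xg) ∈ R m) := by
  have ham := hG.ham
  rcases Nat.exists_eq_add_of_le ham with ⟨K, hK⟩
  have hKa : m - a = K := by omega
  rw [hKa]
  cases K with
  | zero =>
    have ham' : a = m := by omega
    have hfl : fList (List.range' a (0+1)) R = fOp a R := rfl
    have hTb : R a = bumped (R a) ((shp (R a)).sup) := by
      rw [bumped_id]; intro s hs; exact le_sup (mem_shp.mpr ⟨s, hs, rfl⟩)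
    have hgap : ∀ s ∈ R a, s.1 ≤ (shp (R a)).sup → s.1 ≤ maxr (shp (R a)) ((shp (R a)).sup) :=
      fun s hs hsc => le_maxr (mem_shp.mpr ⟨s, hs, rfl⟩) hsc
    have hgc : gs a ≤ (shp (R a)).sup := le_sup (hmem a le_rfl (by omega))
    have hFa : FrontF (R a) (gs a) xg := by rw [ham']; exact hF
    obtain ⟨hcur, hoth⟩ := coreF hFa hgc hTb hgap
    have hmm := (SEL_front hFa hgc).2.2.2.2
    refine ⟨?_, by omega, ?_, ?_⟩
    · intro j hj
      rcases Nat.lt_or_ge j (a-1) with hj2 | hj2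
      · rw [hfl]; exact fOp_far (by omega) (by omega) (by omega)
      · have hj3 : j = a - 1 := by omega
        subst hj3
        rw [hfl, hoth (a-1) (by omega)]
        have : ∀ s ∈ R (a-1),
            (if maxr (shp (R a)) ((shp (R a)).sup) < s.1
              then (s.1, s.2 - cartanA a (a-1)) else s) = id s := by
          intro s hs
          rw [if_neg]
          · rfl
          · have h1 := hG.dfact s hs
            rw [maxr_sup]
            omega
        rw [Multiset.map_congr rfl this, Multiset.map_id]
    · rw [← ham', hfl, hcur, maxr_sup]
      rfl
    · rw [← ham', ell_zero, ← maxr_sup]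
      exact hmm
  | succ k =>
    have hk' : a + k < m := by omega
    obtain ⟨ilow, imid, icur, inxt, ihigh⟩ := midA hG k (Or.inl hk')
    have hbm : a + k + 1 = m := by omega
    have hfl : fList (List.range' a (k+1+1)) R = fOp m (fList (List.range' a (k+1)) R) := by
      rw [range'_snoc a (k+1), fList_snoc]
      rw [show a + (k+1) = m from by omega]
    set T := fList (List.range' a (k+1)) R with hT
    have hTm : T m = bumped (R m) (ell R a k) := by rw [← hbm]; exact inxt
    have hgc : gs m ≤ ell R a k := by
      have h1 : gs m ≤ gs (a+k) := by
        rw [← hbm]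
        exact hdec (a+k) (by omega) (by omega)
      have h2 := riding gs hmem hdec k (by omega)
      omega
    have hgap : ∀ s ∈ R m, s.1 ≤ ell R a k → s.1 ≤ maxr (shp (R m)) (ell R a k) :=
      fun s hs hsc => le_maxr (mem_shp.mpr ⟨s, hs, rfl⟩) hsc
    obtain ⟨hcur, hoth⟩ := coreF hF hgc hTm hgap
    have hmm := (SEL_front hF hgc).2.2.2.2
    have hellK : maxr (shp (R m)) (ell R a k) = ell R a (k+1) := by
      rw [ell_succ, hbm]
    refine ⟨?_, ?_, ?_, ?_⟩
    · intro j hj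
      rw [hfl, fOp_far (by omega) (by omega) (by omega)]
      exact ilow j hj
    · intro j hj1 hj2
      rcases Nat.lt_or_ge j (a+k) with hj3 | hj3
      · rw [hfl, fOp_far (by omega) (by omega) (by omega)]
        exact imid j hj1 hj3
      · have hj4 : j = a + k := by omega
        subst hj4
        rw [hfl, hoth (a+k) (by omega), icur]
        have hjk : a + k - a = k := by omega
        rw [hjk]
        obtain ⟨c, hc⟩ := ell_is_maxr R a k
        have hI : Ilace (shp (R (a+k))) (shp (R m)) := by
          have := hG.ilace (a+k) (by omega) hk'
          rw [hbm] at this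
          exact this
        have h0 := hG.zero_notmem (a+k) (by omega) (by omega)
        have hca : cartanA m (a+k) = -1 := by rw [← hbm]; exact cartan_pred (a+k)
        rw [hca]
        have hmapeq : ∀ s ∈ threeP (shp (R (a+k))) (ell R a k),
            (if maxr (shp (R m)) (ell R a k) < s.1 then (s.1, s.2 - (-1)) else s)
            = (if maxr (shp (R m)) (ell R a k) < s.1 then (s.1, s.2 + 1) else s) := by
          intro s _
          split
          · rw [sub_neg_eq_add]
          · rfl
        rw [Multiset.map_congr rfl hmapeq, hc]
        exact threeP_bump hI h0
    · rw [hfl, hcur, hellK]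
    · rw [← hellK]
      exact hmm
end MID

/-! ### heights -/

section HEIGHTS
variable {R : RC} {a m : ℕ}

lemma sel_val (hG : Good R a m) :
    ∀ k, a + k ≤ m → selCol (a+k) (fList (lowerInt a (a+k-1)) R) = ell R a k + 1 := by
  intro k hk
  cases k with
  | zero =>
    have h0 : a + 0 - 1 = a - 1 := by omega
    rw [h0, lowerInt_pred a hG.ha]
    have hfl : fList [] R = R := rfl
    rw [hfl]
    have hTb : R a = bumped (R a) ((shp (R a)).sup) := by
      rw [bumped_id]; intro s hs; exact le_sup (mem_shp.mpr ⟨s, hs, rfl⟩)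
    rcases Nat.lt_or_ge a m with h | h
    · have := selCol_coreZ (hG.zero a le_rfl h) hTb
      rw [show a + 0 = a from rfl, this, maxr_sup, ell_zero]
    · have ham : a = m := by omega
      rcases hG.zfront with hz | ⟨gs, hmem, hdec, xg, hF⟩
      · have hZ : ZeroReg (R a) := ham ▸ hz
        have := selCol_coreZ hZ hTb
        rw [show a + 0 = a from rfl, this, maxr_sup, ell_zero]
      · have hF' : FrontF (R a) (gs a) xg := by rw [ham]; exact hF
        have hgc : gs a ≤ (shp (R a)).sup := le_sup (hmem a le_rfl (by omega))
        have := selCol_coreF hF' hgc hTb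
        rw [show a + 0 = a from rfl, this, maxr_sup, ell_zero]
  | succ k =>
    have h0 : a + (k+1) - 1 = a + k := by omega
    rw [h0, lowerInt_eq_range' a k]
    have hk' : a + k < m := by omega
    obtain ⟨_, _, _, inxt, _⟩ := midA hG k (Or.inl hk')
    set b := a + k + 1 with hb
    rcases Nat.lt_or_ge b m with h | h
    · have := selCol_coreZ (hG.zero b (by omega) h) inxt
      rw [show a + (k+1) = b from rfl, this]
      rfl
    · have hbm : b = m := by omega
      rcases hG.zfront with hz | ⟨gs, hmem, hdec, xg, hF⟩
      · have hZ : ZeroReg (R b) := hbm ▸ hz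
        have := selCol_coreZ hZ inxt
        rw [show a + (k+1) = b from rfl, this]
        rfl
      · have hF' : FrontF (R b) (gs b) xg := by rw [hbm]; exact hF
        have hgc : gs b ≤ ell R a k := by
          have h1 : gs b ≤ gs (a+k) := hdec (a+k) (by omega) (by omega)
          have h2 := riding gs hmem hdec k (by omega)
          omega
        have := selCol_coreF hF' hgc inxt
        rw [show a + (k+1) = b from rfl, this]
        rfl

lemma ht_val (hG : Good R a m) :
    ∀ k, a + k ≤ m →
      colHt (fList (lowerInt a (a+k)) R (a+k)) (ell R a k + 1)
        = cnt (shp (R (a+k))) (ell R a k + 1) + 1 := by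
  intro k hk
  rw [lowerInt_eq_range' a k]
  rcases Nat.lt_or_ge (a+k) m with h | h
  · obtain ⟨_, _, icur, _, _⟩ := midA hG k (Or.inl h)
    rw [icur, colHt_threeP]
  · have hm : a + k = m := by omega
    rcases hG.zfront with hz | ⟨gs, hmem, hdec, xg, hF⟩
    · obtain ⟨_, _, icur, _, _⟩ := midA hG k (Or.inr ⟨hm, hz⟩)
      rw [icur, colHt_threeP]
    · obtain ⟨_, _, icur, imm⟩ := midF hG gs xg hmem hdec hF
      have hma : m - a = k := by omega
      rw [hma] at icur imm
      rw [hm, icur, colHt_fronP imm]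

lemma step_ineq (hG : Good R a m) :
    ∀ k, a + (k+1) ≤ m →
      cnt (shp (R (a+k+1))) (ell R a (k+1) + 1) ≤ cnt (shp (R (a+k))) (ell R a k + 1) + 1 := by
  intro k hk
  have hgap : cnt (shp (R (a+k+1))) (ell R a (k+1) + 1)
      = cnt (shp (R (a+k+1))) (ell R a k + 1) := cnt_gap _ _
  have hI := hG.ilace (a+k) (by omega) (by omega)
  have := (hI (ell R a k + 1) (by omega)).1
  omega

/-- the per-interval height inequality -/
theorem interval_heights (hG : Good R a m) :
    ∀ b', a ≤ b' → b' < m →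
      colHt (fList (lowerInt a (b'+1)) R (b'+1)) (selCol (b'+1) (fList (lowerInt a b') R))
      ≤ colHt (fList (lowerInt a b') R b') (selCol b' (fList (lowerInt a (b'-1)) R)) + 1 := by
  intro b' hab hbm
  obtain ⟨k, rfl⟩ : ∃ k, b' = a + k := ⟨b' - a, by omega⟩
  have hsel1 := sel_val hG k (by omega)
  have hsel2 := sel_val hG (k+1) (by omega)
  have hht1 := ht_val hG k (by omega)
  have hht2 := ht_val hG (k+1) (by omega)
  have hstep := step_ineq hG k (by omega)
  have hsel2' : selCol (a+k+1) (fList (lowerInt a (a+k+1-1)) R) = ell R a (k+1) + 1 := hsel2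
  have hht2' : colHt (fList (lowerInt a (a+k+1)) R (a+k+1)) (ell R a (k+1) + 1)
      = cnt (shp (R (a+k+1))) (ell R a (k+1) + 1) + 1 := hht2
  rw [show a + k + 1 - 1 = a + k from by omega] at hsel2'
  rw [hsel2', hsel1, hht2', hht1]
  omega

end HEIGHTS

/-! ### the global invariant -/

lemma cnt_pos_of_mem {Λ : Multiset ℕ} {L : ℕ} (h : L ∈ Λ) : 1 ≤ cnt Λ L := by
  unfold cnt
  rw [Nat.one_le_iff_ne_zero, ← Nat.pos_iff_ne_zero, Multiset.card_pos_iff_exists_mem]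
  exact ⟨L, Multiset.mem_filter.mpr ⟨h, le_rfl⟩⟩

lemma exists_ge_of_cnt_pos {Λ : Multiset ℕ} {t : ℕ} (h : 1 ≤ cnt Λ t) : ∃ x ∈ Λ, t ≤ x := by
  unfold cnt at h
  rw [Nat.one_le_iff_ne_zero, ← Nat.pos_iff_ne_zero, Multiset.card_pos_iff_exists_mem] at h
  obtain ⟨x, hx⟩ := h
  rw [Multiset.mem_filter] at hx
  exact ⟨x, hx.1, hx.2⟩

lemma ZeroReg_zeroed {Λ : Multiset ℕ} {l : ℕ} (h0 : (0:ℕ) ∉ Λ) : ZeroReg (zeroed Λ l) := by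
  intro s hs
  rw [zeroed, Multiset.mem_map] at hs
  obtain ⟨L, hL, rfl⟩ := hs
  rw [Multiset.mem_cons] at hL
  refine ⟨?_, rfl⟩
  rcases hL with rfl | hL
  · omega
  · have : L ∈ Λ := Multiset.mem_of_mem_erase hL
    rcases Nat.eq_zero_or_pos L with h | h
    · exact absurd (h ▸ this) h0
    · exact h

lemma FrontF_threeP {Λ : Multiset ℕ} {l : ℕ} (h0 : (0:ℕ) ∉ Λ) :
    FrontF (threeP Λ l) (l + 1) (-1) := by
  refine ⟨by norm_num, by omega, ?_, ?_⟩
  · rw [shp_threeP]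
    exact Multiset.mem_cons_self _ _
  · intro s hs
    rw [threeP, Multiset.mem_cons] at hs
    rcases hs with rfl | hs
    · exact ⟨by omega, by norm_num, fun _ => rfl⟩
    · rw [Multiset.mem_map] at hs
      obtain ⟨L, hL, rfl⟩ := hs
      have hLΛ : L ∈ Λ := Multiset.mem_of_mem_erase hL
      have h1L : 1 ≤ L := by
        rcases Nat.eq_zero_or_pos L with h | h
        · exact absurd (h ▸ hLΛ) h0
        · exact h
      refine ⟨h1L, ?_, ?_⟩
      · split <;> norm_num
      · intro hll
        simp only at hll
        rw [if_neg (by omega)]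

lemma FrontF_fronP {ν : RP} {g l : ℕ} {xg : ℤ} (hF : FrontF ν g xg) (hgl : g ≤ l) :
    FrontF (fronP ν l xg) (l + 1) (xg - 1) := by
  obtain ⟨hxg, hg1, hgm, hall⟩ := hF
  refine ⟨by omega, by omega, ?_, ?_⟩
  · rw [fronP, shp_cons]
    exact Multiset.mem_cons_self _ _
  · intro s hs
    rw [fronP, Multiset.mem_cons] at hs
    rcases hs with rfl | hs
    · exact ⟨by omega, le_rfl, fun _ => rfl⟩
    · rw [Multiset.mem_map] at hs
      obtain ⟨t, ht, rfl⟩ := hs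
      have htν : t ∈ ν := Multiset.mem_of_mem_erase ht
      obtain ⟨ht1, ht2, ht3⟩ := hall t htν
      by_cases hlt : l < t.1
      · rw [if_pos hlt]
        have := ht3 (by omega)
        exact ⟨by omega, by omega, fun _ => by simp only []; omega⟩
      · rw [if_neg hlt]
        exact ⟨ht1, by omega, fun h => by omega⟩

lemma ell_mem_or_zero (R : RC) (a k : ℕ) :
    ell R a k ∈ shp (R (a+k)) ∨ ell R a k = 0 := by
  rcases Nat.eq_zero_or_pos (ell R a k) with h | h
  · exact Or.inr h
  · obtain ⟨c, hc⟩ := ell_is_maxr R a k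
    rw [hc] at h ⊢
    exact Or.inl (maxr_mem h)

lemma ell_dec (R : RC) (a k : ℕ) : ell R a (k+1) ≤ ell R a k := maxr_le _ _

structure Inv (R : RC) (a0 m0 : ℕ) : Prop where
  ha : 1 ≤ a0
  ham : a0 ≤ m0
  zero0 : R 0 = 0
  zero : ∀ b, 1 ≤ b → b < m0 → ZeroReg (R b)
  zfront : ZeroReg (R m0) ∨
    ∃ gs : ℕ → ℕ, (∀ j, a0 ≤ j → j ≤ m0 → gs j ∈ shp (R j)) ∧
      (∀ j, a0 ≤ j → j < m0 → gs (j+1) ≤ gs j) ∧ ∃ xg, FrontF (R m0) (gs m0) xg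
  ilace : ∀ b, 1 ≤ b → b < m0 → Ilace (shp (R b)) (shp (R (b+1)))

lemma inv_empty {n : ℕ} (hn : 1 ≤ n) : Inv emptyRC 1 n := by
  refine ⟨le_rfl, hn, rfl, ?_, Or.inl ?_, ?_⟩
  · intro b _ _ s hs
    simp [emptyRC] at hs
  · intro s hs
    simp [emptyRC] at hs
  · intro b _ _ t _
    simp [emptyRC, shp, cnt]

lemma good_of_inv {R : RC} {a0 m0 a m : ℕ} (hI : Inv R a0 m0)
    (ha : 1 ≤ a) (ham : a ≤ m) (hm : m ≤ m0) (hlast : m = m0 → a0 ≤ a) :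
    Good R a m := by
  refine ⟨ha, ham, ?_, ?_, ?_, ?_⟩
  · -- dfact
    intro s hs
    rcases Nat.lt_or_ge a 2 with h2 | h2
    · have ha1 : a = 1 := by omega
      rw [ha1] at hs
      simp only [show (1:ℕ) - 1 = 0 from rfl, hI.zero0] at hs
      exact absurd hs (Multiset.notMem_zero s)
    · have hb : 1 ≤ a - 1 := by omega
      have hbm : a - 1 < m0 := by omega
      have hz := hI.zero (a-1) hb hbm
      have h1s := (hz s hs).1
      have hIl := hI.ilace (a-1) hb hbm
      rw [show a - 1 + 1 = a from by omega] at hIl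
      have hc1 : 1 ≤ cnt (shp (R (a-1))) s.1 := cnt_pos_of_mem (mem_shp.mpr ⟨s, hs, rfl⟩)
      have hc2 := (hIl s.1 h1s).2
      obtain ⟨x, hx, hx2⟩ := exists_ge_of_cnt_pos (Λ := shp (R a)) (t := s.1) (by omega)
      exact le_trans hx2 (le_sup hx)
  · -- zero
    intro j hj1 hj2
    exact hI.zero j (by omega) (by omega)
  · -- zfront
    rcases Nat.lt_or_ge m m0 with h | h
    · exact Or.inl (hI.zero m (by omega) h)
    · have hmm : m = m0 := by omega
      have ha0a := hlast hmm
      subst hmm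
      rcases hI.zfront with hz | ⟨gs, hmem, hdec, xg, hF⟩
      · exact Or.inl hz
      · exact Or.inr ⟨gs, fun j h1 h2 => hmem j (by omega) h2,
          fun j h1 h2 => hdec j (by omega) h2, xg, hF⟩
  · -- ilace
    intro j hj1 hj2
    exact hI.ilace j (by omega) (by omega)

/-- build the new invariant from a final-state description -/
lemma inv_of_desc {R : RC} {a m : ℕ} (hG : Good R a m) (R' : RC) (xg' : ℤ)
    (hz0 : R 0 = 0)
    (hlow : ∀ j, j < a → R' j = R j)
    (hmid : ∀ j, a ≤ j → j < m → R' j = zeroed (shp (R j)) (ell R a (j - a)))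
    (hshpm : shp (R' m) = (ell R a (m-a) + 1) ::ₘ (shp (R m)).erase (ell R a (m-a)))
    (hfr : FrontF (R' m) (ell R a (m-a) + 1) xg')
    (hzero_old : ∀ b, 1 ≤ b → b < a → ZeroReg (R b))
    (hilace_old : ∀ b, 1 ≤ b → b < a → Ilace (shp (R b)) (shp (R (b+1)))) :
    Inv R' a m := by
  have ha := hG.ha
  have ham := hG.ham
  have hshape : ∀ j, a ≤ j → j ≤ m →
      shp (R' j) = (ell R a (j - a) + 1) ::ₘ (shp (R j)).erase (ell R a (j - a)) := by
    intro j h1 h2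
    rcases Nat.lt_or_ge j m with h | h
    · rw [hmid j h1 h, shp_zeroed]
    · have hje : j = m := by omega
      subst hje
      exact hshpm
  refine ⟨ha, ham, ?_, ?_, ?_, ?_⟩
  · rw [hlow 0 (by omega)]
    exact hz0
  · -- zero
    intro b h1 h2
    rcases Nat.lt_or_ge b a with h | h
    · rw [hlow b h]
      exact hzero_old b h1 h
    · rw [hmid b h h2]
      exact ZeroReg_zeroed (hG.zero_notmem b h (by omega))
  · -- zfront
    right
    refine ⟨fun j => ell R a (j - a) + 1, ?_, ?_, xg', ?_⟩
    · intro j h1 h2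
      rw [hshape j h1 h2]
      exact Multiset.mem_cons_self _ _
    · intro j h1 h2
      show ell R a (j + 1 - a) + 1 ≤ ell R a (j - a) + 1
      rw [show j + 1 - a = (j - a) + 1 from by omega]
      have := ell_dec R a (j - a)
      omega
    · exact hfr
  · -- ilace
    intro b h1 h2
    rcases Nat.lt_or_ge (b+1) a with h | h
    · rw [hlow b (by omega), hlow (b+1) h]
      exact hilace_old b h1 (by omega)
    · rcases Nat.eq_or_lt_of_le h with h' | h'
      · -- a = b + 1
        have hv := hshape (b+1) (by omega) (by omega)
        rw [show b + 1 - a = 0 from by omega] at hv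
        have h0' : ell R a 0 = (shp (R (b+1))).sup := by
          rw [ell_zero, h']
        rw [h0'] at hv
        rw [hlow b (by omega), hv]
        exact Ilace_edge (hilace_old b h1 (by omega))
          (hG.zero_notmem (b+1) (by omega) (by omega))
      · -- a ≤ b
        have hab : a ≤ b := by omega
        obtain ⟨k, rfl⟩ : ∃ k, b = a + k := ⟨b - a, by omega⟩
        have hμ := hshape (a+k) (by omega) (by omega)
        have hν := hshape (a+k+1) (by omega) (by omega)
        rw [show a + k - a = k from by omega] at hμ
        rw [show a + k + 1 - a = k + 1 from by omega] at hν
        rw [hμ, hν]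
        exact Ilace_step (hG.ilace (a+k) (by omega) (by omega))
          (ell_mem_or_zero R a k)
          (hG.zero_notmem (a+k) (by omega) (by omega))
          (hG.zero_notmem (a+k+1) (by omega) (by omega))

theorem inv_step {R : RC} {a0 m0 a m : ℕ} (hI : Inv R a0 m0)
    (ha : 1 ≤ a) (ham : a ≤ m) (hm : m ≤ m0) (hlast : m = m0 → a0 ≤ a) :
    Inv (fList (lowerInt a m) R) a m := by
  have hG := good_of_inv hI ha ham hm hlast
  have hli : lowerInt a m = List.range' a ((m - a) + 1) := by
    rw [show m = a + (m - a) from by omega, lowerInt_eq_range',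
      show a + (m-a) - a = m - a from by omega]
  set R' := fList (lowerInt a m) R with hR'
  have hR'r : R' = fList (List.range' a ((m-a)+1)) R := by rw [hR', hli]
  have hzero_old : ∀ b, 1 ≤ b → b < a → ZeroReg (R b) :=
    fun b h1 h2 => hI.zero b h1 (by omega)
  have hilace_old : ∀ b, 1 ≤ b → b < a → Ilace (shp (R b)) (shp (R (b+1))) :=
    fun b h1 h2 => hI.ilace b h1 (by omega)
  rcases hG.zfront with hz | ⟨gs, hmem, hdec, xg, hF⟩
  · obtain ⟨ilow, imid, icur, _, _⟩ := midA hG (m-a) (Or.inr ⟨by omega, hz⟩)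
    rw [show a + (m-a) = m from by omega] at icur
    refine inv_of_desc hG R' (-1) hI.zero0
      (fun j hj => by rw [hR'r]; exact ilow j hj)
      (fun j h1 h2 => by rw [hR'r]; exact imid j h1 (by omega))
      ?_ ?_ hzero_old hilace_old
    · rw [hR'r, icur, shp_threeP]
    · rw [hR'r, icur]
      exact FrontF_threeP (hG.zero_notmem m hG.ham le_rfl)
  · obtain ⟨ilow, imid, icur, imm⟩ := midF hG gs xg hmem hdec hF
    refine inv_of_desc hG R' (xg - 1) hI.zero0
      (fun j hj => by rw [hR'r]; exact ilow j hj)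
      (fun j h1 h2 => by rw [hR'r]; exact imid j h1 h2)
      ?_ ?_ hzero_old hilace_old
    · rw [hR'r, icur]
      exact shp_fronP imm
    · rw [hR'r, icur]
      have hgl : gs m ≤ ell R a (m - a) := by
        have := riding gs hmem hdec (m-a) (by omega)
        rw [show a + (m-a) = m from by omega] at this
        exact this
      exact FrontF_fronP hF hgl

/-! ### gluing -/

lemma Rk_zero (ivs : List (ℕ × ℕ)) : Rk ivs 0 = emptyRC := rfl

lemma seqOf_append (A B : List (ℕ × ℕ)) : seqOf (A ++ B) = seqOf A ++ seqOf B := by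
  unfold seqOf
  rw [List.map_append, List.flatten_append]

lemma Rk_succ (ivs : List (ℕ × ℕ)) (k : ℕ) (hk : k < ivs.length) :
    Rk ivs (k+1) = fList (lowerInt (ivs[k]'hk).1 (ivs[k]'hk).2) (Rk ivs k) := by
  unfold Rk RCseq
  rw [List.take_succ, List.getElem?_eq_getElem hk]
  rw [show (some (ivs[k]'hk)).toList = [ivs[k]'hk] from rfl]
  rw [seqOf_append, fList_append]
  unfold seqOf
  simp

lemma inv_chain {n : ℕ} (hn : 0 < n) {ivs : List (ℕ × ℕ)} (hc : IsCascDecomp n ivs) :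
    ∀ k, k ≤ ivs.length → ∃ a0 m0, Inv (Rk ivs k) a0 m0 ∧
      ∀ (hk : k < ivs.length), (ivs[k]'hk).2 ≤ m0 ∧ ((ivs[k]'hk).2 = m0 → a0 ≤ (ivs[k]'hk).1) := by
  intro k
  induction k with
  | zero =>
    intro _
    refine ⟨1, n, ?_, ?_⟩
    · rw [Rk_zero]
      exact inv_empty hn
    · intro hk
      have := hc.1 (ivs[0]'hk) (List.getElem_mem hk)
      exact ⟨this.2.2, fun _ => this.1⟩
  | succ k ih =>
    intro hk1
    have hk : k < ivs.length := by omega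
    obtain ⟨a0, m0, hInv, hleg⟩ := ih (by omega)
    obtain ⟨hm0, hlast⟩ := hleg hk
    have hlow := hc.1 (ivs[k]'hk) (List.getElem_mem hk)
    refine ⟨(ivs[k]'hk).1, (ivs[k]'hk).2, ?_, ?_⟩
    · rw [Rk_succ ivs k hk]
      exact inv_step hInv hlow.1 hlow.2.1 hm0 hlast
    · intro hk2
      have hch := List.isChain_iff_getElem.mp hc.2 k (by omega)
      rcases hch with h | ⟨h1, h2⟩
      · exact ⟨by omega, fun he => by omega⟩
      · exact ⟨by omega, fun _ => h2⟩

theorem heights_increase_by_at_most_one' (n : ℕ) (hn : 0 < n)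
    (ivs : List (ℕ × ℕ)) (hc : IsCascDecomp n ivs)
    (k : ℕ) (hk : k < ivs.length) (a m : ℕ) (hiv : ivs[k]'hk = (a, m)) :
    ∀ b, a ≤ b → b < m →
      colHt (fList (lowerInt a (b + 1)) (Rk ivs k) (b + 1))
          (ivCol (a, m) (b + 1) (Rk ivs k))
        ≤ colHt (fList (lowerInt a b) (Rk ivs k) b) (ivCol (a, m) b (Rk ivs k)) + 1 := by
  intro b hab hbm
  obtain ⟨a0, m0, hInv, hleg⟩ := inv_chain hn hc k (by omega)
  obtain ⟨hm0, hlast⟩ := hleg hk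
  rw [hiv] at hm0 hlast
  have hlow := hc.1 (ivs[k]'hk) (List.getElem_mem hk)
  rw [hiv] at hlow
  have hG : Good (Rk ivs k) a m := good_of_inv hInv hlow.1 hlow.2.1 hm0 hlast
  have := interval_heights hG b hab hbm
  exact this


/-- Let `I_{k+1} = (a, …, m)` (0-based `k`).  For `a ≤ b ≤ m`, let `h_b` be the height of
the box added to the `b`-th partition when `f_{I_{k+1}}` is applied to `R_k`, i.e.
the number of strings of length at least `c` in the `b`-th partition after applying
`f_a, …, f_b`, where `c = ivCol (a, m) b (Rk ivs k)` is the column of the added box.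
Then `h_{b+1} ≤ h_b + 1` for `a ≤ b < m`. -/
theorem heights_increase_by_at_most_one (n : ℕ) (hn : 0 < n)
    (ivs : List (ℕ × ℕ)) (hc : IsCascDecomp n ivs)
    (k : ℕ) (hk : k < ivs.length) (a m : ℕ) (hiv : ivs[k]'hk = (a, m)) :
    ∀ b, a ≤ b → b < m →
      colHt (fList (lowerInt a (b + 1)) (Rk ivs k) (b + 1))
          (ivCol (a, m) (b + 1) (Rk ivs k))
        ≤ colHt (fList (lowerInt a b) (Rk ivs k) b) (ivCol (a, m) b (Rk ivs k)) + 1 :=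
  heights_increase_by_at_most_one' n hn ivs hc k hk a m hiv

end CascRC
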